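/- Let Λ be a row-finite k-graph with no sources, let c be a T-valued 2-cocycle on Λ, and let t be a Cuntz–Krieger (Λ,c)-family in a C*-algebra (i.e. a Toeplitz–Cuntz–Krieger (Λ,c)-family with Σ_{λ ∈ vΛ^n} t_λ t_λ* = t_v for all v ∈ Λ^0 and n ∈ ℕ^k). Let λ ∈ Λ, set v := r(λ), let p, q ∈ ℕ^k, and let θ : vΛ^p → vΛ^q be a bijection such that μ ∼ θ(μ) for all μ ∈ vΛ^p. Then V := Σ_{μ ∈ vΛ^p} t_λ t_λ* t_μ t_{θ(μ)}* satisfies V V* = V* V = t_λ t_λ*; that is, V is a unitary element of the corner (t_λ t_λ*) C*(t) (t_λ t_λ*). -/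

import Mathlib

open scoped BigOperators

/-- A `k`-graph: a countable category with degree functor `d : Λ → ℕ^k`
satisfying the factorisation property.  Composition `comp μ ν` is only
meaningful when `s μ = r ν`. -/
structure KGraph (k : ℕ) where
  Path : Type
  countable : Countable Path
  r : Path → Path
  s : Path → Path
  d : Path → (Fin k → ℕ)
  comp : Path → Path → Path
  d_r : ∀ l, d (r l) = 0
  d_s : ∀ l, d (s l) = 0
  r_of_vertex : ∀ v, d v = 0 → r v = v
  s_of_vertex : ∀ v, d v = 0 → s v = v
  id_comp : ∀ l, comp (r l) l = l
  comp_id : ∀ l, comp l (s l) = l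
  r_comp : ∀ μ ν, s μ = r ν → r (comp μ ν) = r μ
  s_comp : ∀ μ ν, s μ = r ν → s (comp μ ν) = s ν
  d_comp : ∀ μ ν, s μ = r ν → d (comp μ ν) = d μ + d ν
  comp_assoc : ∀ l μ ν, s l = r μ → s μ = r ν →
    comp (comp l μ) ν = comp l (comp μ ν)
  factor : ∀ (l : Path) (m n : Fin k → ℕ), d l = m + n →
    ∃! p : Path × Path, d p.1 = m ∧ d p.2 = n ∧ s p.1 = r p.2 ∧ comp p.1 p.2 = l

namespace KGraph

variable {k : ℕ} (G : KGraph k)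

def IsVertex (v : G.Path) : Prop := G.d v = 0

/-- `MCE μ ν = μΛ ∩ νΛ ∩ Λ^{d μ ⊔ d ν}`. -/
def MCE (μ ν : G.Path) : Set G.Path :=
  {l | G.d l = G.d μ ⊔ G.d ν ∧
      (∃ α, G.s μ = G.r α ∧ G.comp μ α = l) ∧
      (∃ β, G.s ν = G.r β ∧ G.comp ν β = l)}

def FinitelyAligned : Prop := ∀ μ ν : G.Path, (G.MCE μ ν).Finite

/-- `Ext(μ; E) = ⋃_{ν ∈ E} {α : μα ∈ MCE(μ,ν)}`. -/
def Ext (μ : G.Path) (E : Set G.Path) : Set G.Path :=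
  {α | G.s μ = G.r α ∧ ∃ ν ∈ E, G.comp μ α ∈ G.MCE μ ν}

/-- `Ext` computed relative to a sub-`k`-graph with path set `W`. -/
def ExtIn (W : Set G.Path) (μ : G.Path) (E : Set G.Path) : Set G.Path :=
  {α | G.s μ = G.r α ∧ ∃ ν ∈ E, G.comp μ α ∈ G.MCE μ ν ∩ W}

/-- `E` is exhaustive at `v` relative to the sub-`k`-graph with path set `W`. -/
def ExhaustiveIn (W : Set G.Path) (v : G.Path) (E : Set G.Path) : Prop :=
  ∀ l ∈ W, G.r l = v → ∃ μ ∈ E, (G.MCE l μ ∩ W).Nonempty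

def Exhaustive (v : G.Path) (E : Set G.Path) : Prop := G.ExhaustiveIn Set.univ v E

/-- Membership in `FE` of the sub-`k`-graph with path set `W`. -/
def IsFEIn (W : Set G.Path) (E : Set G.Path) : Prop :=
  E.Finite ∧ E ⊆ W ∧ (∀ μ ∈ E, ¬ G.IsVertex μ) ∧
    ∃ v, G.IsVertex v ∧ (∀ μ ∈ E, G.r μ = v) ∧ G.ExhaustiveIn W v E

def IsFE (E : Set G.Path) : Prop := G.IsFEIn Set.univ E

/-- A satiated collection of finite exhaustive sets, relative to the sub-`k`-graph `W`. -/
def SatiatedIn (W : Set G.Path) (Ε : Set (Set G.Path)) : Prop :=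
  (∀ E ∈ Ε, G.IsFEIn W E) ∧
  ∀ F ∈ Ε, ∀ v, G.IsVertex v → (∀ μ ∈ F, G.r μ = v) →
    ((∀ l ∈ W, G.r l = v → l ≠ v → insert l F ∈ Ε) ∧
     (∀ l ∈ W, G.r l = v →
        (¬ ∃ μ ∈ F, ∃ μ', G.s μ = G.r μ' ∧ G.comp μ μ' = l) →
        G.ExtIn W l F ∈ Ε) ∧
     (∀ lam lam', lam ∈ F → G.s lam = G.r lam' → G.comp lam lam' ∈ F →
        lam' ≠ G.s lam → F \ {G.comp lam lam'} ∈ Ε) ∧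
     (∀ lam ∈ F, ∀ Gs ∈ Ε, (∀ μ ∈ Gs, G.r μ = G.s lam) →
        ((F \ {lam}) ∪ (G.comp lam) '' Gs) ∈ Ε))

def Satiated (Ε : Set (Set G.Path)) : Prop := G.SatiatedIn Set.univ Ε

end KGraph

/-- A normalised `𝕋`-valued categorical `2`-cocycle on a `k`-graph, with the
circle realised as the norm-one complex numbers. -/
structure KGraph.Cocycle {k : ℕ} (G : KGraph k) where
  c : G.Path → G.Path → ℂ
  norm_one : ∀ μ ν, G.s μ = G.r ν → ‖c μ ν‖ = 1
  cocycle : ∀ l μ ν, G.s l = G.r μ → G.s μ = G.r ν →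
    c l μ * c (G.comp l μ) ν = c μ ν * c l (G.comp μ ν)
  left_id : ∀ l, c (G.r l) l = 1
  right_id : ∀ l, c l (G.s l) = 1

namespace KGraph

variable {k : ℕ} (G : KGraph k)

section CStar

variable {A : Type*} [NonUnitalNormedRing A] [StarRing A] [CStarRing A]
  [NormedSpace ℂ A] [IsScalarTower ℂ A A] [SMulCommClass ℂ A A]
  [StarModule ℂ A] [CompleteSpace A]

/-- Toeplitz–Cuntz–Krieger `(Λ, c)`-family. -/
def IsTCK (σ : G.Cocycle) (t : G.Path → A) : Prop :=
  (∀ v, G.IsVertex v → star (t v) = t v ∧ t v * t v = t v) ∧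
  (∀ v w, G.IsVertex v → G.IsVertex w → v ≠ w → t v * t w = 0) ∧
  (∀ μ ν, G.s μ = G.r ν → t μ * t ν = σ.c μ ν • t (G.comp μ ν)) ∧
  (∀ l, star (t l) * t l = t (G.s l)) ∧
  (∀ μ ν (F : Finset G.Path), (F : Set G.Path) = G.MCE μ ν →
    (t μ * star (t μ)) * (t ν * star (t ν)) = ∑ l ∈ F, t l * star (t l))

open scoped Classical in
/-- `Δ(t)^F = ∏_{l ∈ F} (q_v - q_l)`; the factors commute for a TCK family, so the
`noncommProd` below is the product from the paper.  The product is computed in the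
unitization (with a harmless prefactor `q_v`, which acts as the identity on each
factor for a TCK family with `F ⊆ vΛ`), so that the empty product is `q_v`. -/
noncomputable def Delta (t : G.Path → A) (v : G.Path) (F : Finset G.Path) : A :=
  if h : (F : Set G.Path).Pairwise (Function.onFun Commute fun l =>
      ((t v * star (t v) - t l * star (t l) : A) : Unitization ℂ A))
  then (((t v * star (t v) : A) : Unitization ℂ A) *
      F.noncommProd (fun l => ((t v * star (t v) - t l * star (t l) : A) : Unitization ℂ A)) h).snd
  else 0

/-- Relative Cuntz–Krieger `(Λ, c; Ε)`-family. -/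
def IsRelCK (σ : G.Cocycle) (Ε : Set (Set G.Path)) (t : G.Path → A) : Prop :=
  G.IsTCK σ t ∧ ∀ (F : Finset G.Path) (v : G.Path), (F : Set G.Path) ∈ Ε →
    G.IsVertex v → (∀ μ ∈ F, G.r μ = v) → G.Delta t v F = 0

/-- Cuntz–Krieger `(Λ, c)`-family (finitely aligned case). -/
def IsCK (σ : G.Cocycle) (t : G.Path → A) : Prop :=
  G.IsRelCK σ {E | G.IsFE E} t

/-- The `C*`-subalgebra of `A` generated by a family `t`, as a subset of `A`. -/
def cstarOf (t : G.Path → A) : Set A :=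
  closure (↑(NonUnitalStarAlgebra.adjoin ℂ (Set.range t)) : Set A)

end CStar

/-- Row-finite with no sources: every `vΛ^n` is finite and nonempty. -/
def RowFiniteNoSources : Prop :=
  ∀ v, G.IsVertex v → ∀ n : Fin k → ℕ,
    {l | G.r l = v ∧ G.d l = n}.Finite ∧ {l | G.r l = v ∧ G.d l = n}.Nonempty

section CStar2

variable {A : Type*} [NonUnitalNormedRing A] [StarRing A] [CStarRing A]
  [NormedSpace ℂ A] [IsScalarTower ℂ A A] [SMulCommClass ℂ A A]
  [StarModule ℂ A] [CompleteSpace A]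

/-- Cuntz–Krieger family, row-finite no sources formulation:
`∑_{λ ∈ vΛ^n} t_λ t_λ* = t_v`. -/
def IsCKrf (σ : G.Cocycle) (t : G.Path → A) : Prop :=
  G.IsTCK σ t ∧ ∀ v (n : Fin k → ℕ) (F : Finset G.Path), G.IsVertex v →
    (F : Set G.Path) = {l | G.r l = v ∧ G.d l = n} →
    ∑ l ∈ F, t l * star (t l) = t v

end CStar2

/-- A filter in a `k`-graph. -/
def IsFilter (S : Set G.Path) : Prop :=
  (∀ l, (∃ α, G.s l = G.r α ∧ G.comp l α ∈ S) → l ∈ S) ∧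
  (∀ μ ∈ S, ∀ ν ∈ S, (G.MCE μ ν ∩ S).Nonempty)

/-- An ultrafilter: a filter meeting every `Λ^n`. -/
def IsUltrafilter (S : Set G.Path) : Prop :=
  G.IsFilter S ∧ ∀ n : Fin k → ℕ, ∃ l ∈ S, G.d l = n

/-- `ℓ_μ(S) = {ν : νΛ ∩ μS ≠ ∅}`. -/
def lmap (μ : G.Path) (S : Set G.Path) : Set G.Path :=
  {ν | ∃ τ ∈ S, G.s μ = G.r τ ∧ ∃ α, G.s ν = G.r α ∧ G.comp ν α = G.comp μ τ}

/-- `μ ∼ ν`: `ℓ_μ(S) = ℓ_ν(S)` for every ultrafilter `S` with `r(S) = s(μ)`. -/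
def PEquiv (μ ν : G.Path) : Prop :=
  ∀ S, G.IsUltrafilter S → G.s μ ∈ S → G.lmap μ S = G.lmap ν S

/-- `d` with values in `ℤ^k`. -/
def dZ (l : G.Path) : Fin k → ℤ := fun i => (G.d l i : ℤ)

/-- `Per(Λ) ≤ ℤ^k`, generated by `{d(μ) - d(ν) : μ ∼ ν}`. -/
def PerGroup : AddSubgroup (Fin k → ℤ) :=
  AddSubgroup.closure
    {m | ∃ μ ν, G.s μ = G.s ν ∧ G.PEquiv μ ν ∧ m = G.dZ μ - G.dZ ν}

/-- The hereditary set `H_Per`. -/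
def HPer : Set G.Path :=
  {v | G.IsVertex v ∧ ∀ m n : Fin k → ℕ,
    ((fun i => (m i : ℤ)) - fun i => (n i : ℤ)) ∈ G.PerGroup →
    ∀ l, G.r l = v → G.d l = m →
      ∃ μ, G.r μ = v ∧ G.d μ = n ∧ G.s μ = G.s l ∧ G.PEquiv l μ}

end KGraph


/-!
Write `q_λ = t_λ t_λ*` and `W = Σ_{μ ∈ vΛ^p} t_μ t_{θ(μ)}*`, so that `V = q_λ W`. Since `θ` is a
bijection between two sets `vΛ^p`, `vΛ^q` of paths of fixed degree, the Cuntz–Krieger relations give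
`W W* = W* W = t_v`. The relation `μ ∼ θ(μ)` is what makes `W` commute with `q_λ`: refining `q_λ`
to a large degree shows `q_λ t_μ = t_μ Σ_α q_α`, the sum over the extensions `α` with `λ ≤ μα`,
and evaluating `μ ∼ θ(μ)` at an ultrafilter through `α` shows `λ ≤ μα ↔ λ ≤ θ(μ)α`. A unitary of
the corner at `t_v` that commutes with the subprojection `q_λ` restricts to a unitary of the corner
at `q_λ`.
-/

theorem IsStarProjection.mul_star_self_and_star_mul_self_of_commute {R : Type*} [Semigroup R]
    [StarMul R] {P W e : R} (hP : IsStarProjection P) (hW : W * star W = e)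
    (hW' : star W * W = e) (heP : e * P = P) (hc : Commute P W) :
    P * W * star (P * W) = P ∧ star (P * W) * (P * W) = P := by
  have hPe : P * e = P := by
    have he : star e = e := by rw [← hW, star_mul, star_star]
    simpa only [star_mul, he, hP.isSelfAdjoint.star_eq] using congrArg star heP
  constructor
  · calc P * W * star (P * W) = P * (W * star W) * P := by
          rw [star_mul, hP.isSelfAdjoint.star_eq]; simp only [mul_assoc]
      _ = P := by rw [hW, hPe, hP.isIdempotentElem.eq]
  · calc star (P * W) * (P * W) = star W * (P * P * W) := by
          rw [star_mul, hP.isSelfAdjoint.star_eq]; simp only [mul_assoc]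
      _ = P := by rw [hP.isIdempotentElem.eq, hc.eq, ← mul_assoc, hW', heP]

namespace KGraph

variable {k : ℕ} {G : KGraph k}

theorem comp_inj_of_d_eq {a x b y : G.Path} (hax : G.s a = G.r x) (hby : G.s b = G.r y)
    (h : G.comp a x = G.comp b y) (hd : G.d a = G.d b) : a = b ∧ x = y := by
  have hdx : G.d x = G.d y := by
    have := G.d_comp a x hax
    rw [h, G.d_comp b y hby, hd] at this
    exact (add_left_cancel this).symm
  obtain ⟨_, _, hu⟩ := G.factor (G.comp b y) (G.d a) (G.d x) (by rw [← h, G.d_comp a x hax])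
  have := (hu (a, x) ⟨rfl, rfl, hax, h⟩).trans (hu (b, y) ⟨hd.symm, hdx.symm, hby, rfl⟩).symm
  exact Prod.ext_iff.1 this

theorem comp_left_cancel {a x y : G.Path} (hx : G.s a = G.r x) (hy : G.s a = G.r y)
    (h : G.comp a x = G.comp a y) : x = y :=
  (comp_inj_of_d_eq hx hy h rfl).2

variable (G) in
def IsPrefix (a l : G.Path) : Prop :=
  ∃ β, G.s a = G.r β ∧ G.comp a β = l

theorem isPrefix_refl (a : G.Path) : G.IsPrefix a a :=
  ⟨G.s a, (G.r_of_vertex _ (G.d_s a)).symm, G.comp_id a⟩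

theorem isPrefix_comp {a β : G.Path} (h : G.s a = G.r β) : G.IsPrefix a (G.comp a β) :=
  ⟨β, h, rfl⟩

namespace IsPrefix

variable {a b c : G.Path}

theorem r_eq (h : G.IsPrefix a b) : G.r b = G.r a := by
  obtain ⟨β, hβ, rfl⟩ := h
  exact G.r_comp a β hβ

theorem d_le (h : G.IsPrefix a b) : G.d a ≤ G.d b := by
  obtain ⟨β, hβ, rfl⟩ := h
  rw [G.d_comp a β hβ]
  exact le_self_add

theorem trans (hab : G.IsPrefix a b) (hbc : G.IsPrefix b c) : G.IsPrefix a c := by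
  obtain ⟨β, hβ, rfl⟩ := hab
  obtain ⟨γ, hγ, rfl⟩ := hbc
  rw [G.s_comp a β hβ] at hγ
  exact ⟨G.comp β γ, by rw [G.r_comp β γ hγ, hβ], (G.comp_assoc a β γ hβ hγ).symm⟩

theorem comp_left (h : G.IsPrefix b c) (hab : G.s a = G.r b) :
    G.IsPrefix (G.comp a b) (G.comp a c) := by
  obtain ⟨β, hβ, rfl⟩ := h
  exact ⟨β, by rw [G.s_comp a b hab, hβ], G.comp_assoc a b β hab hβ⟩

theorem eq_of_d_eq (h : G.IsPrefix a b) (hd : G.d a = G.d b) : a = b := by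
  obtain ⟨β, hβ, rfl⟩ := h
  have hβ0 : G.d β = 0 := by
    rw [G.d_comp a β hβ] at hd
    exact add_eq_left.1 hd.symm
  rw [← G.r_of_vertex β hβ0, ← hβ, G.comp_id]

theorem of_d_le (ha : G.IsPrefix a c) (hb : G.IsPrefix b c) (hd : G.d a ≤ G.d b) :
    G.IsPrefix a b := by
  obtain ⟨α, hα, hαc⟩ := ha
  obtain ⟨β, hβ, rfl⟩ := hb
  have hdα : G.d α = (G.d b - G.d a) + G.d β := by
    have := G.d_comp a α hα
    rw [hαc, G.d_comp b β hβ, ← add_tsub_cancel_of_le hd, add_assoc] at this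
    exact (add_left_cancel this).symm
  obtain ⟨⟨z, w⟩, ⟨hz, hw, hzw, rfl⟩, -⟩ := G.factor α _ _ hdα
  have haz : G.s a = G.r z := by rw [hα, G.r_comp z w hzw]
  have hcomp : G.comp (G.comp a z) w = G.comp b β := by
    rw [G.comp_assoc a z w haz hzw, hαc]
  have hdaz : G.d (G.comp a z) = G.d b := by
    rw [G.d_comp a z haz, hz, add_tsub_cancel_of_le hd]
  have := comp_inj_of_d_eq (by rw [G.s_comp a z haz, hzw]) hβ hcomp hdaz
  exact this.1 ▸ isPrefix_comp haz

end IsPrefix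

theorem exists_isPrefix_d_eq {l : G.Path} {n : Fin k → ℕ} (h : n ≤ G.d l) :
    ∃ a, G.IsPrefix a l ∧ G.d a = n := by
  obtain ⟨⟨a, β⟩, ⟨ha, -, haβ, hc⟩, -⟩ := G.factor l n (G.d l - n) (add_tsub_cancel_of_le h).symm
  exact ⟨a, ⟨β, haβ, hc⟩, ha⟩

theorem exists_mem_MCE_isPrefix {μ ν l : G.Path} (hμ : G.IsPrefix μ l) (hν : G.IsPrefix ν l) :
    ∃ κ ∈ G.MCE μ ν, G.IsPrefix κ l := by
  obtain ⟨κ, hκ, hdκ⟩ := exists_isPrefix_d_eq (sup_le hμ.d_le hν.d_le)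
  exact ⟨κ, ⟨hdκ, hμ.of_d_le hκ (hdκ ▸ le_sup_left), hν.of_d_le hκ (hdκ ▸ le_sup_right)⟩, hκ⟩

theorem MCE_eq_empty {μ ν : G.Path} (hd : G.d μ = G.d ν) (hne : μ ≠ ν) : G.MCE μ ν = ∅ := by
  refine Set.eq_empty_of_forall_notMem fun κ ⟨hdκ, hμ, hν⟩ => hne ?_
  rw [← hd, sup_idem] at hdκ
  exact (IsPrefix.eq_of_d_eq hμ hdκ.symm).trans (IsPrefix.eq_of_d_eq hν (hd ▸ hdκ.symm)).symm

theorem isFilter_setOf_isPrefix_chain (τ : ℕ → G.Path)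
    (hτ : ∀ j, G.IsPrefix (τ j) (τ (j + 1))) :
    G.IsFilter {ν | ∃ j, G.IsPrefix ν (τ j)} := by
  have mono : ∀ ν i j, i ≤ j → G.IsPrefix ν (τ i) → G.IsPrefix ν (τ j) := by
    intro ν i j hij hν
    induction j, hij using Nat.le_induction with
    | base => exact hν
    | succ j _ ih => exact ih.trans (hτ j)
  refine ⟨fun l ⟨α, hα, j, hj⟩ => ⟨j, (isPrefix_comp hα).trans hj⟩, ?_⟩
  rintro μ ⟨i, hi⟩ ν ⟨j, hj⟩
  obtain ⟨κ, hκ, hκτ⟩ := exists_mem_MCE_isPrefix (mono μ i _ (le_max_left i j) hi)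
    (mono ν j _ (le_max_right i j) hj)
  exact ⟨κ, hκ, _, hκτ⟩

/-- Extending `ζ` by edges of degree `(1, …, 1)` gives an infinite path through `ζ`; its
prefixes form the ultrafilter. -/
theorem exists_isUltrafilter_mem (hrf : G.RowFiniteNoSources) (ζ : G.Path) :
    ∃ S, G.IsUltrafilter S ∧ ζ ∈ S := by
  choose e he using fun l : G.Path => (hrf (G.s l) (G.d_s l) 1).2
  let τ : ℕ → G.Path := fun j => Nat.rec ζ (fun _ x => G.comp x (e x)) j
  have hτ : ∀ j, G.IsPrefix (τ j) (τ (j + 1)) := fun j => isPrefix_comp (he (τ j)).1.symm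
  have hdτ : ∀ j : ℕ, (fun _ => j) ≤ G.d (τ j) := by
    intro j
    induction j with
    | zero => exact fun _ => Nat.zero_le _
    | succ j ih =>
      show _ ≤ G.d (G.comp (τ j) (e (τ j)))
      rw [G.d_comp _ _ (he (τ j)).1.symm, (he (τ j)).2]
      exact fun i => Nat.succ_le_succ (ih i)
  refine ⟨_, ⟨isFilter_setOf_isPrefix_chain τ hτ, fun n => ?_⟩, 0, isPrefix_refl ζ⟩
  have hn : n ≤ G.d (τ (∑ i, n i)) :=
    fun i => (Finset.single_le_sum (fun _ _ => Nat.zero_le _) (Finset.mem_univ i)).trans (hdτ _ i)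
  obtain ⟨a, ha, hda⟩ := exists_isPrefix_d_eq hn
  exact ⟨a, ⟨_, ha⟩, hda⟩

theorem PEquiv.symm {μ η : G.Path} (h : G.PEquiv μ η) (hs : G.s η = G.s μ) : G.PEquiv η μ :=
  fun S hS hη => (h S hS (hs ▸ hη)).symm

/-- Evaluate `μ ∼ η` at an ultrafilter `S ∋ ζ`: `l ∈ ℓ_μ(S) = ℓ_η(S)`, and a common extension
in `S` of `ζ` and the witness for `l ∈ ℓ_η(S)` makes `l` and `ηζ` prefixes of one path. -/
theorem PEquiv.isPrefix_comp (hrf : G.RowFiniteNoSources) {μ η l ζ : G.Path}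
    (h : G.PEquiv μ η) (hs : G.s η = G.s μ) (hζ : G.s μ = G.r ζ) (hd : G.d l ≤ G.d ζ)
    (hl : G.IsPrefix l (G.comp μ ζ)) : G.IsPrefix l (G.comp η ζ) := by
  obtain ⟨S, hS, hζS⟩ := exists_isUltrafilter_mem hrf ζ
  have hμS : G.s μ ∈ S :=
    hS.1.1 _ ⟨ζ, by rw [G.s_of_vertex _ (G.d_s μ), hζ], by rwa [hζ, G.id_comp]⟩
  have hl' : l ∈ G.lmap η S := h S hS hμS ▸ ⟨ζ, hζS, hζ, hl⟩
  obtain ⟨τ, hτS, hητ, α, hα, hlα⟩ := hl'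
  obtain ⟨ρ, ⟨-, hτρ, hζρ⟩, -⟩ := hS.1.2 τ hτS ζ hζS
  have hlρ : G.IsPrefix l (G.comp η ρ) :=
    (hlα ▸ KGraph.isPrefix_comp hα).trans (IsPrefix.comp_left hτρ hητ)
  have hηζρ : G.IsPrefix (G.comp η ζ) (G.comp η ρ) := IsPrefix.comp_left hζρ (hs.trans hζ)
  refine hlρ.of_d_le hηζρ (hd.trans ?_)
  rw [G.d_comp η ζ (hs.trans hζ)]
  exact le_add_self

theorem PEquiv.isPrefix_comp_iff (hrf : G.RowFiniteNoSources) {μ η l ζ : G.Path}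
    (h : G.PEquiv μ η) (hs : G.s η = G.s μ) (hζ : G.s μ = G.r ζ) (hd : G.d l ≤ G.d ζ) :
    G.IsPrefix l (G.comp μ ζ) ↔ G.IsPrefix l (G.comp η ζ) :=
  ⟨h.isPrefix_comp hrf hs hζ hd, (h.symm hs).isPrefix_comp hrf hs.symm (hs.trans hζ) hd⟩

theorem isVertex_s (l : G.Path) : G.IsVertex (G.s l) := G.d_s l

theorem isVertex_r (l : G.Path) : G.IsVertex (G.r l) := G.d_r l

noncomputable def RowFiniteNoSources.paths (hrf : G.RowFiniteNoSources) {v : G.Path}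
    (hv : G.IsVertex v) (n : Fin k → ℕ) : Finset G.Path :=
  (hrf v hv n).1.toFinset

namespace RowFiniteNoSources

variable (hrf : G.RowFiniteNoSources)

theorem coe_paths {v : G.Path} (hv : G.IsVertex v) (n : Fin k → ℕ) :
    (hrf.paths hv n : Set G.Path) = {l | G.r l = v ∧ G.d l = n} :=
  Set.Finite.coe_toFinset _

theorem mem_paths {v l : G.Path} {hv : G.IsVertex v} {n : Fin k → ℕ} :
    l ∈ hrf.paths hv n ↔ G.r l = v ∧ G.d l = n :=
  Set.Finite.mem_toFinset _

open Classical in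
noncomputable def extensionsThrough (l η : G.Path) (n : Fin k → ℕ) : Finset G.Path :=
  (hrf.paths (isVertex_s η) n).filter fun α => G.IsPrefix l (G.comp η α)

theorem mem_extensionsThrough {l η α : G.Path} {n : Fin k → ℕ} :
    α ∈ hrf.extensionsThrough l η n ↔
      (G.r α = G.s η ∧ G.d α = n) ∧ G.IsPrefix l (G.comp η α) := by
  classical
  rw [extensionsThrough, Finset.mem_filter, mem_paths]

end RowFiniteNoSources

theorem PEquiv.extensionsThrough_eq (hrf : G.RowFiniteNoSources) {μ η l : G.Path}
    {n : Fin k → ℕ} (h : G.PEquiv μ η) (hs : G.s η = G.s μ) (hn : G.d l ≤ n) :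
    hrf.extensionsThrough l μ n = hrf.extensionsThrough l η n := by
  ext α
  simp only [hrf.mem_extensionsThrough, hs]
  refine and_congr_right fun ⟨hr, hd⟩ => ?_
  exact h.isPrefix_comp_iff hrf hs hr.symm (hd ▸ hn)

theorem Cocycle.star_c_mul_c (σ : G.Cocycle) {μ ν : G.Path} (h : G.s μ = G.r ν) :
    star (σ.c μ ν) * σ.c μ ν = 1 := by
  rw [RCLike.star_def, Complex.conj_mul', σ.norm_one μ ν h]
  norm_num

section Families

variable {A : Type*} [NonUnitalNormedRing A] [StarRing A] [NormedSpace ℂ A]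
  {σ : G.Cocycle} {t : G.Path → A}

local notation "Q" l:max => t l * star (t l)

namespace IsTCK

theorem star_vertex {v : G.Path} (ht : G.IsTCK σ t) (hv : G.IsVertex v) : star (t v) = t v :=
  (ht.1 v hv).1

theorem mul {μ ν : G.Path} (ht : G.IsTCK σ t) (h : G.s μ = G.r ν) :
    t μ * t ν = σ.c μ ν • t (G.comp μ ν) :=
  ht.2.2.1 μ ν h

theorem star_mul_self (ht : G.IsTCK σ t) (l : G.Path) : star (t l) * t l = t (G.s l) :=
  ht.2.2.2.1 l

theorem mul_t_s (ht : G.IsTCK σ t) (l : G.Path) : t l * t (G.s l) = t l := by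
  rw [ht.mul (G.r_of_vertex _ (G.d_s l)).symm, G.comp_id, σ.right_id, one_smul]

theorem t_r_mul (ht : G.IsTCK σ t) (l : G.Path) : t (G.r l) * t l = t l := by
  rw [ht.mul (G.s_of_vertex _ (G.d_r l)), G.id_comp, σ.left_id, one_smul]

theorem t_s_mul_star (ht : G.IsTCK σ t) (l : G.Path) : t (G.s l) * star (t l) = star (t l) := by
  rw [← ht.star_vertex (G.d_s l), ← star_mul, ht.mul_t_s]

theorem star_mul_t_r (ht : G.IsTCK σ t) (l : G.Path) : star (t l) * t (G.r l) = star (t l) := by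
  rw [← ht.star_vertex (G.d_r l), ← star_mul, ht.t_r_mul]

theorem Q_mul_self (ht : G.IsTCK σ t) (l : G.Path) : Q l * t l = t l := by
  rw [mul_assoc, ht.star_mul_self, ht.mul_t_s]

theorem star_mul_Q (ht : G.IsTCK σ t) (l : G.Path) : star (t l) * Q l = star (t l) := by
  rw [← mul_assoc, ht.star_mul_self, ht.t_s_mul_star]

theorem isStarProjection_Q (ht : G.IsTCK σ t) (l : G.Path) : IsStarProjection (Q l) :=
  ⟨by rw [IsIdempotentElem, ← mul_assoc, ht.Q_mul_self], by
    rw [IsSelfAdjoint, star_mul, star_star]⟩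

theorem t_comp {μ ν : G.Path} (ht : G.IsTCK σ t) (h : G.s μ = G.r ν) :
    t (G.comp μ ν) = star (σ.c μ ν) • (t μ * t ν) := by
  rw [ht.mul h, smul_smul, σ.star_c_mul_c h, one_smul]

theorem Q_comp [IsScalarTower ℂ A A] [SMulCommClass ℂ A A] [StarModule ℂ A] {μ ν : G.Path}
    (ht : G.IsTCK σ t) (h : G.s μ = G.r ν) :
    Q (G.comp μ ν) = t μ * Q ν * star (t μ) := by
  rw [ht.t_comp h, star_smul, star_star, smul_mul_smul_comm, σ.star_c_mul_c h, one_smul]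
  simp only [star_mul, mul_assoc]

theorem Q_comp_mul [IsScalarTower ℂ A A] [SMulCommClass ℂ A A] [StarModule ℂ A] {μ α : G.Path}
    (ht : G.IsTCK σ t) (h : G.s μ = G.r α) :
    Q (G.comp μ α) * t μ = t μ * Q α := by
  rw [ht.Q_comp h, mul_assoc, ht.star_mul_self, h, mul_assoc, mul_assoc, ht.star_mul_t_r]

theorem star_mul_eq_zero {μ ν : G.Path} (ht : G.IsTCK σ t) (hd : G.d μ = G.d ν) (hne : μ ≠ ν) :
    star (t μ) * t ν = 0 := by
  have hQ : Q μ * Q ν = 0 := by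
    simpa using ht.2.2.2.2 μ ν ∅ (by rw [MCE_eq_empty hd hne, Finset.coe_empty])
  calc star (t μ) * t ν = star (t μ) * Q μ * (Q ν * t ν) := by
        rw [ht.star_mul_Q, ht.Q_mul_self]
    _ = star (t μ) * (Q μ * Q ν) * t ν := by simp only [mul_assoc]
    _ = 0 := by rw [hQ, mul_zero, zero_mul]

theorem star_mul_eq_zero_of_not_isPrefix [SMulCommClass ℂ A A] {η κ : G.Path} (ht : G.IsTCK σ t)
    (hd : G.d η ≤ G.d κ) (h : ¬ G.IsPrefix η κ) : star (t η) * t κ = 0 := by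
  obtain ⟨η', ⟨α, hα, rfl⟩, hdη'⟩ := exists_isPrefix_d_eq hd
  have hne : η ≠ η' := by
    rintro rfl
    exact h (isPrefix_comp hα)
  rw [ht.t_comp hα, mul_smul_comm, ← mul_assoc, ht.star_mul_eq_zero hdη'.symm hne, zero_mul,
    smul_zero]

theorem sum_mul_star_sum {ι : Type*} (ht : G.IsTCK σ t) (F : Finset ι) (f g : ι → G.Path)
    {n : Fin k → ℕ} (hd : ∀ i ∈ F, G.d (g i) = n) (hg : Set.InjOn g F)
    (hs : ∀ i ∈ F, G.s (g i) = G.s (f i)) :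
    (∑ i ∈ F, t (f i) * star (t (g i))) * star (∑ i ∈ F, t (f i) * star (t (g i)))
      = ∑ i ∈ F, Q (f i) := by
  rw [star_sum, Finset.sum_mul_sum]
  refine Finset.sum_congr rfl fun i hi => ?_
  rw [Finset.sum_eq_single_of_mem i hi]
  · calc t (f i) * star (t (g i)) * star (t (f i) * star (t (g i)))
        = t (f i) * (star (t (g i)) * t (g i)) * star (t (f i)) := by
          rw [star_mul, star_star]; simp only [mul_assoc]
      _ = Q (f i) := by rw [ht.star_mul_self, hs i hi, ht.mul_t_s]
  · intro j hj hji
    calc t (f i) * star (t (g i)) * star (t (f j) * star (t (g j)))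
        = t (f i) * (star (t (g i)) * t (g j)) * star (t (f j)) := by
          rw [star_mul, star_star]; simp only [mul_assoc]
      _ = 0 := by
          rw [ht.star_mul_eq_zero ((hd i hi).trans (hd j hj).symm) fun h => hji (hg hj hi h.symm),
            mul_zero, zero_mul]

theorem star_sum_mul_sum {ι : Type*} (ht : G.IsTCK σ t) (F : Finset ι) (f g : ι → G.Path)
    {n : Fin k → ℕ} (hd : ∀ i ∈ F, G.d (f i) = n) (hf : Set.InjOn f F)
    (hs : ∀ i ∈ F, G.s (g i) = G.s (f i)) :
    star (∑ i ∈ F, t (f i) * star (t (g i))) * (∑ i ∈ F, t (f i) * star (t (g i)))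
      = ∑ i ∈ F, Q (g i) := by
  have hstar : star (∑ i ∈ F, t (f i) * star (t (g i))) = ∑ i ∈ F, t (g i) * star (t (f i)) := by
    simp only [star_sum, star_mul, star_star]
  have := ht.sum_mul_star_sum F g f hd hf fun i hi => (hs i hi).symm
  rwa [← hstar, star_star] at this

end IsTCK

namespace IsCKrf

theorem sum_Q_eq_of_bijOn {ι : Type*} (hck : G.IsCKrf σ t) {F : Finset ι} {f : ι → G.Path}
    {v : G.Path} (hv : G.IsVertex v) {n : Fin k → ℕ}
    (hf : Set.BijOn f F {l | G.r l = v ∧ G.d l = n}) : ∑ i ∈ F, Q (f i) = t v := by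
  classical
  rw [← Finset.sum_image (f := fun l => Q l) hf.injOn]
  exact hck.2 v n _ hv (by rw [Finset.coe_image, hf.image_eq])

theorem sum_Q_paths (hck : G.IsCKrf σ t) (hrf : G.RowFiniteNoSources) {v : G.Path}
    (hv : G.IsVertex v) (n : Fin k → ℕ) : ∑ l ∈ hrf.paths hv n, Q l = t v :=
  hck.2 v n _ hv (hrf.coe_paths hv n)

variable [IsScalarTower ℂ A A] [SMulCommClass ℂ A A] [StarModule ℂ A]

theorem Q_eq_sum_Q_comp (hck : G.IsCKrf σ t) (hrf : G.RowFiniteNoSources) (l : G.Path)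
    (n : Fin k → ℕ) : Q l = ∑ γ ∈ hrf.paths (isVertex_s l) n, Q (G.comp l γ) := by
  calc Q l = t l * t (G.s l) * star (t l) := by rw [hck.1.mul_t_s]
    _ = ∑ γ ∈ hrf.paths (isVertex_s l) n, t l * Q γ * star (t l) := by
        rw [← hck.sum_Q_paths hrf (isVertex_s l) n, Finset.mul_sum, Finset.sum_mul]
    _ = _ := Finset.sum_congr rfl fun γ hγ => (hck.1.Q_comp (hrf.mem_paths.1 hγ).1.symm).symm

open Classical in
theorem Q_eq_sum_Q_isPrefix (hck : G.IsCKrf σ t) (hrf : G.RowFiniteNoSources) {l : G.Path}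
    {m : Fin k → ℕ} (hm : G.d l ≤ m) :
    Q l = ∑ κ ∈ (hrf.paths (isVertex_r l) m).filter (G.IsPrefix l), Q κ := by
  rw [hck.Q_eq_sum_Q_comp hrf l (m - G.d l)]
  refine Finset.sum_nbij (G.comp l) (fun γ hγ => ?_) (fun γ hγ γ' hγ' he => ?_)
    (fun κ hκ => ?_) fun _ _ => rfl
  · obtain ⟨hr, hd⟩ := hrf.mem_paths.1 hγ
    refine Finset.mem_filter.2 ⟨hrf.mem_paths.2 ⟨G.r_comp l γ hr.symm, ?_⟩, isPrefix_comp hr.symm⟩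
    rw [G.d_comp l γ hr.symm, hd, add_tsub_cancel_of_le hm]
  · exact comp_left_cancel (hrf.mem_paths.1 hγ).1.symm (hrf.mem_paths.1 hγ').1.symm he
  · obtain ⟨hκ, β, hβ, rfl⟩ := Finset.mem_filter.1 hκ
    refine ⟨β, hrf.mem_paths.2 ⟨hβ.symm, ?_⟩, rfl⟩
    rw [← (hrf.mem_paths.1 hκ).2, G.d_comp l β hβ, add_tsub_cancel_left]

/-- Refining `q_l` to degree `d(η) + n`, only the paths `ηα` survive multiplication by `t_η`. -/
theorem Q_mul_t (hck : G.IsCKrf σ t) (hrf : G.RowFiniteNoSources) {l η : G.Path}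
    {n : Fin k → ℕ} (hn : G.d l ≤ G.d η + n) :
    Q l * t η = t η * ∑ α ∈ hrf.extensionsThrough l η n, Q α := by
  classical
  set E := hrf.extensionsThrough l η n
  set K := (hrf.paths (isVertex_r l) (G.d η + n)).filter (G.IsPrefix l)
  have hEK : E.image (G.comp η) ⊆ K := by
    intro κ hκ
    obtain ⟨α, hα, rfl⟩ := Finset.mem_image.1 hκ
    obtain ⟨⟨hr, hd⟩, hl⟩ := hrf.mem_extensionsThrough.1 hα
    refine Finset.mem_filter.2 ⟨hrf.mem_paths.2 ⟨hl.r_eq, ?_⟩, hl⟩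
    rw [G.d_comp η α hr.symm, hd]
  have hzero : ∀ κ ∈ K, κ ∉ E.image (G.comp η) → Q κ * t η = 0 := by
    intro κ hκ hκE
    obtain ⟨hκ, hl⟩ := Finset.mem_filter.1 hκ
    have hd := (hrf.mem_paths.1 hκ).2
    have hη : ¬ G.IsPrefix η κ := by
      rintro ⟨α, hα, rfl⟩
      refine hκE (Finset.mem_image.2 ⟨α, hrf.mem_extensionsThrough.2 ⟨⟨hα.symm, ?_⟩, hl⟩, rfl⟩)
      rwa [G.d_comp η α hα, add_right_inj] at hd
    have := hck.1.star_mul_eq_zero_of_not_isPrefix (hd ▸ le_self_add) hη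
    rw [mul_assoc, ← star_star (t η), ← star_mul, this, star_zero, mul_zero]
  calc Q l * t η = ∑ κ ∈ K, Q κ * t η := by rw [hck.Q_eq_sum_Q_isPrefix hrf hn, Finset.sum_mul]
    _ = ∑ κ ∈ E.image (G.comp η), Q κ * t η := (Finset.sum_subset hEK hzero).symm
    _ = ∑ α ∈ E, Q (G.comp η α) * t η := Finset.sum_image fun α hα α' hα' =>
        comp_left_cancel (hrf.mem_extensionsThrough.1 hα).1.1.symm
          (hrf.mem_extensionsThrough.1 hα').1.1.symm
    _ = ∑ α ∈ E, t η * Q α := Finset.sum_congr rfl fun α hα =>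
        hck.1.Q_comp_mul (hrf.mem_extensionsThrough.1 hα).1.1.symm
    _ = _ := Finset.mul_sum _ _ _ |>.symm

/-- Both `q_l t_μ` and `q_l t_η` cut down to the same extensions, by `μ ∼ η`. -/
theorem commute_Q_mul_star (hck : G.IsCKrf σ t) (hrf : G.RowFiniteNoSources) {μ η : G.Path}
    (h : G.PEquiv μ η) (hs : G.s η = G.s μ) (l : G.Path) :
    Commute (Q l) (t μ * star (t η)) := by
  set E := ∑ α ∈ hrf.extensionsThrough l η (G.d l), Q α
  have hE : star E = E :=
    (isSelfAdjoint_sum _ fun α _ => (hck.1.isStarProjection_Q α).isSelfAdjoint).star_eq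
  have hμ : Q l * t μ = t μ * E := by
    rw [hck.Q_mul_t hrf le_add_self, h.extensionsThrough_eq hrf hs le_rfl]
  have hη : star (t η) * Q l = E * star (t η) := by
    rw [← (hck.1.isStarProjection_Q l).isSelfAdjoint.star_eq, ← star_mul,
      hck.Q_mul_t hrf le_add_self, star_mul, hE]
  calc Q l * (t μ * star (t η)) = t μ * E * star (t η) := by rw [← mul_assoc, hμ]
    _ = t μ * star (t η) * Q l := by rw [mul_assoc, ← hη, ← mul_assoc]

end IsCKrf

end Families

end KGraph

theorem stmt17_general {k : ℕ} (G : KGraph k) (hrf : G.RowFiniteNoSources) (σ : G.Cocycle)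
    {A : Type*} [NonUnitalNormedRing A] [StarRing A]
    [NormedSpace ℂ A] [IsScalarTower ℂ A A] [SMulCommClass ℂ A A]
    [StarModule ℂ A]
    (t : G.Path → A) (ht : G.IsCKrf σ t)
    (lam : G.Path) (p q : Fin k → ℕ) (θ : G.Path → G.Path)
    (hθmem : ∀ μ : G.Path, G.r μ = G.r lam → G.d μ = p →
      G.r (θ μ) = G.r lam ∧ G.d (θ μ) = q ∧ G.s (θ μ) = G.s μ ∧ G.PEquiv μ (θ μ))
    (hθinj : ∀ μ μ' : G.Path, G.r μ = G.r lam → G.d μ = p →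
      G.r μ' = G.r lam → G.d μ' = p → θ μ = θ μ' → μ = μ')
    (hθsurj : ∀ η : G.Path, G.r η = G.r lam → G.d η = q →
      ∃ μ : G.Path, G.r μ = G.r lam ∧ G.d μ = p ∧ θ μ = η)
    (F : Finset G.Path)
    (hF : (F : Set G.Path) = {μ | G.r μ = G.r lam ∧ G.d μ = p}) :
    ∀ V : A,
      V = ∑ μ ∈ F, t lam * star (t lam) * (t μ * star (t (θ μ))) →
      V * star V = t lam * star (t lam) ∧ star V * V = t lam * star (t lam) := by
  intro V hV
  have hmemF : ∀ μ ∈ F, G.r μ = G.r lam ∧ G.d μ = p := fun μ hμ =>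
    show μ ∈ {μ | G.r μ = G.r lam ∧ G.d μ = p} from hF ▸ Finset.mem_coe.2 hμ
  have hθ := fun μ hμ => hθmem μ (hmemF μ hμ).1 (hmemF μ hμ).2
  have hθbij : Set.BijOn θ F {η | G.r η = G.r lam ∧ G.d η = q} := by
    refine ⟨fun μ hμ => ⟨(hθ μ hμ).1, (hθ μ hμ).2.1⟩, fun μ hμ μ' hμ' =>
      hθinj μ μ' (hmemF μ hμ).1 (hmemF μ hμ).2 (hmemF μ' hμ').1 (hmemF μ' hμ').2,
      fun η ⟨hr, hd⟩ => ?_⟩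
    obtain ⟨μ, hrμ, hdμ, rfl⟩ := hθsurj η hr hd
    exact ⟨μ, hF ▸ ⟨hrμ, hdμ⟩, rfl⟩
  have hdθ : ∀ μ ∈ F, G.d (θ μ) = q := fun μ hμ => (hθ μ hμ).2.1
  have hsθ : ∀ μ ∈ F, G.s (θ μ) = G.s μ := fun μ hμ => (hθ μ hμ).2.2.1
  set W := ∑ μ ∈ F, t μ * star (t (θ μ))
  have hWW : W * star W = t (G.r lam) :=
    (ht.1.sum_mul_star_sum F id θ hdθ hθbij.injOn hsθ).trans
      (ht.2 _ p F (KGraph.isVertex_r lam) hF)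
  have hWW' : star W * W = t (G.r lam) :=
    (ht.1.star_sum_mul_sum F id θ (fun μ hμ => (hmemF μ hμ).2) (Set.injOn_id _) hsθ).trans
      (ht.sum_Q_eq_of_bijOn (KGraph.isVertex_r lam) hθbij)
  have hcomm : Commute (t lam * star (t lam)) W := Commute.sum_right _ _ _ fun μ hμ =>
    ht.commute_Q_mul_star hrf (hθ μ hμ).2.2.2 (hsθ μ hμ) lam
  rw [hV, ← Finset.mul_sum]
  exact (ht.1.isStarProjection_Q lam).mul_star_self_and_star_mul_self_of_commute hWW hWW'
    (by rw [← mul_assoc, ht.1.t_r_mul]) hcomm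

/-- `V = Σ_{μ ∈ vΛ^p} q_λ t_μ t_{θ(μ)}*` is a unitary of the corner
`q_λ C*(t) q_λ`, when `θ : vΛ^p → vΛ^q` is a bijection with `μ ∼ θ(μ)`. -/
theorem stmt17 {k : ℕ} (G : KGraph k) (hrf : G.RowFiniteNoSources) (σ : G.Cocycle)
    {A : Type*} [NonUnitalNormedRing A] [StarRing A] [CStarRing A]
    [NormedSpace ℂ A] [IsScalarTower ℂ A A] [SMulCommClass ℂ A A]
    [StarModule ℂ A] [CompleteSpace A]
    (t : G.Path → A) (ht : G.IsCKrf σ t)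
    (lam : G.Path) (p q : Fin k → ℕ) (θ : G.Path → G.Path)
    (hθmem : ∀ μ : G.Path, G.r μ = G.r lam → G.d μ = p →
      G.r (θ μ) = G.r lam ∧ G.d (θ μ) = q ∧ G.s (θ μ) = G.s μ ∧ G.PEquiv μ (θ μ))
    (hθinj : ∀ μ μ' : G.Path, G.r μ = G.r lam → G.d μ = p →
      G.r μ' = G.r lam → G.d μ' = p → θ μ = θ μ' → μ = μ')
    (hθsurj : ∀ η : G.Path, G.r η = G.r lam → G.d η = q →
      ∃ μ : G.Path, G.r μ = G.r lam ∧ G.d μ = p ∧ θ μ = η)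
    (F : Finset G.Path)
    (hF : (F : Set G.Path) = {μ | G.r μ = G.r lam ∧ G.d μ = p}) :
    ∀ V : A,
      V = ∑ μ ∈ F, t lam * star (t lam) * (t μ * star (t (θ μ))) →
      V * star V = t lam * star (t lam) ∧ star V * V = t lam * star (t lam) :=
  stmt17_general G hrf σ t ht lam p q θ hθmem hθinj hθsurj F hF
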